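/- There exists a constant C > 0 (depending on λ_e and λ) such that the following holds for all sufficiently large n: if p satisfies 100·log n/n ≤ p ≤ 1 and G is a simple graph on n vertices in which every vertex has degree strictly between np/2 and 3np/2, and every subset S with 1 ≤ |S| ≤ n/2 satisfies |∂S| ≥ (2/3)·|S|(n−|S|)·p, then every vertex ℓ of G satisfies v_G({ℓ}) ≤ C·log n. -/

import Mathlib

open Finset
open scoped Classical

/-- Transmission rate from node `i` into the set `S`: `λ·|N(i) ∩ S|/deg(i)`,
interpreted as `0` when `deg(i) = 0`. -/
noncomputable def rate {n : ℕ} (lam : ℝ) (G : SimpleGraph (Fin n))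
    (S : Finset (Fin n)) (i : Fin n) : ℝ :=
  if G.degree i = 0 then 0
  else lam * ((G.neighborFinset i ∩ S).card : ℝ) / (G.degree i : ℝ)

/-- The version age `v_G(S)`, defined by downward recursion on `n - |S|`. -/
noncomputable def vAge (lam_e lam : ℝ) {n : ℕ} (G : SimpleGraph (Fin n))
    (S : Finset (Fin n)) : ℝ :=
  (lam_e + ∑ i ∈ Sᶜ.attach, rate lam G S i.1 * vAge lam_e lam G (insert i.1 S)) /
    (lam * (S.card : ℝ) / (n : ℝ) + ∑ i ∈ Sᶜ, rate lam G S i)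
termination_by Sᶜ.card
decreasing_by
  have hi := i.2
  rw [Finset.compl_insert]
  exact Finset.card_erase_lt_of_mem hi

/-- The complete bipartite graph on `Fin n` whose left part consists of the
first `L` vertices. -/
def biGraph (n L : ℕ) : SimpleGraph (Fin n) where
  Adj i j := (i.val < L) ≠ (j.val < L)
  symm := ⟨fun _ _ h => Ne.symm h⟩
  loopless := ⟨fun _ h => h rfl⟩

/-- Canonical subset of `K_{L,R}` with `i` left vertices and `j` right vertices. -/
def canonSet (n L i j : ℕ) : Finset (Fin n) :=
  ({v | v.val < i} : Finset (Fin n)) ∪ ({v | L ≤ v.val ∧ v.val < L + j} : Finset (Fin n))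

/-- `u(i,j) = (λ/λ_e)·v(i,j)` for the complete bipartite graph `K_{L, n-L}`. -/
noncomputable def uIJ (lam_e lam : ℝ) (n L i j : ℕ) : ℝ :=
  (lam / lam_e) * vAge lam_e lam (biGraph n L) (canonSet n L i j)

/-- The number of edges of `G` with exactly one endpoint in `S`. -/
noncomputable def edgeBoundary {n : ℕ} (G : SimpleGraph (Fin n)) (S : Finset (Fin n)) : ℕ :=
  ∑ i ∈ S, ((G.neighborFinset i).filter fun j => j ∉ S).card

/-- The probability, under the Erdős–Rényi measure `G(n,p)`, of a set `A` of graphs. -/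
noncomputable def erProb (n : ℕ) (p : ℝ) (A : Finset (SimpleGraph (Fin n))) : ℝ :=
  ∑ G ∈ A, p ^ G.edgeFinset.card * (1 - p) ^ (n.choose 2 - G.edgeFinset.card)

lemma card_inter_eq_sum {n : ℕ} (G : SimpleGraph (Fin n)) (T : Finset (Fin n)) (i : Fin n) :
    ((G.neighborFinset i) ∩ T).card = ∑ j ∈ T, if G.Adj i j then 1 else 0 := by
  rw [Finset.inter_comm, ← Finset.filter_mem_eq_inter, Finset.card_filter]
  exact Finset.sum_congr rfl fun j _ => by simp [SimpleGraph.mem_neighborFinset]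

lemma edgeBoundary_eq {n : ℕ} (G : SimpleGraph (Fin n)) (S : Finset (Fin n)) :
    edgeBoundary G S = ∑ i ∈ S, ∑ j ∈ Sᶜ, if G.Adj i j then 1 else 0 := by
  unfold edgeBoundary
  refine Finset.sum_congr rfl fun i _ => ?_
  have h : (G.neighborFinset i).filter (fun j => j ∉ S) = G.neighborFinset i ∩ Sᶜ := by
    ext j; simp
  rw [h, card_inter_eq_sum]

lemma sum_compl_card_inter {n : ℕ} (G : SimpleGraph (Fin n)) (S : Finset (Fin n)) :
    ∑ i ∈ Sᶜ, ((G.neighborFinset i) ∩ S).card = edgeBoundary G S := by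
  rw [edgeBoundary_eq, Finset.sum_comm]
  refine Finset.sum_congr rfl fun i _ => ?_
  rw [card_inter_eq_sum]
  exact Finset.sum_congr rfl fun j _ => by rw [G.adj_comm]

lemma edgeBoundary_compl {n : ℕ} (G : SimpleGraph (Fin n)) (S : Finset (Fin n)) :
    edgeBoundary G Sᶜ = edgeBoundary G S := by
  rw [← sum_compl_card_inter G Sᶜ, compl_compl]
  unfold edgeBoundary
  refine Finset.sum_congr rfl fun i _ => ?_
  congr 1
  ext j; simp

lemma sum_inv_le (m : ℕ) : ∑ i ∈ Finset.range m, (1:ℝ)/(i+1) ≤ 1 + Real.log m := by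
  have h := harmonic_le_one_add_log m
  have h2 : ((harmonic m : ℚ) : ℝ) = ∑ i ∈ Finset.range m, (1:ℝ)/(i+1) := by
    rw [harmonic]
    push_cast
    simp [one_div]
  linarith [h, h2.ge, h2.le]

set_option maxHeartbeats 1000000 in
theorem key_bound (lam_e lam : ℝ) (hlam_e : 0 < lam_e) (hlam : 0 < lam)
    (n : ℕ) (hn : 0 < n) (p : ℝ) (hp : 0 < p)
    (G : SimpleGraph (Fin n))
    (hdeg : ∀ v : Fin n, (n : ℝ) * p / 2 < (G.degree v : ℝ) ∧
        (G.degree v : ℝ) < 3 * (n : ℝ) * p / 2)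
    (hbd : ∀ S : Finset (Fin n), S.Nonempty → (S.card : ℝ) ≤ (n : ℝ) / 2 →
        2 / 3 * (S.card : ℝ) * ((n : ℝ) - S.card) * p ≤ (edgeBoundary G S : ℝ)) :
    ∀ k : ℕ, ∀ S : Finset (Fin n), Sᶜ.card = k → S.Nonempty →
      vAge lam_e lam G S ≤ lam_e / lam +
        ∑ j ∈ Finset.Ico S.card n, 9 * lam_e / (2 * lam * ((min j (n - j) : ℕ) : ℝ)) := by
  have hn0 : (n : ℝ) ≠ 0 := Nat.cast_ne_zero.mpr hn.ne'
  have hnpos : (0:ℝ) < n := Nat.cast_pos.mpr hn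
  have hdegpos : ∀ v : Fin n, (0:ℝ) < (G.degree v : ℝ) := by
    intro v
    have h1 := (hdeg v).1
    nlinarith
  have hratenn : ∀ (S : Finset (Fin n)) (i : Fin n), 0 ≤ rate lam G S i := by
    intro S i
    unfold rate
    split
    · exact le_refl 0
    · positivity
  intro k
  induction k using Nat.strong_induction_on with
  | _ k ih =>
  intro S hSk hSne
  rcases Nat.eq_zero_or_pos k with hk0 | hkpos
  · -- base case: S = univ
    subst hk0
    have hSuniv : S = Finset.univ := by
      rwa [Finset.card_eq_zero, Finset.compl_eq_empty_iff] at hSk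
    subst hSuniv
    rw [vAge]
    have hcu : (Finset.univ : Finset (Fin n))ᶜ = ∅ := Finset.compl_univ
    rw [Finset.sum_attach (Finset.univ : Finset (Fin n))ᶜ
      (fun j => rate lam G Finset.univ j * vAge lam_e lam G (insert j Finset.univ))]
    rw [hcu]
    simp only [Finset.sum_empty, add_zero, Finset.card_univ, Fintype.card_fin, Finset.Ico_self]
    have h : lam * (n:ℝ) / n = lam := by field_simp
    rw [h]
  · -- inductive step
    have hSc : Sᶜ.Nonempty := by
      rw [← Finset.card_pos, hSk]; exact hkpos
    have hmn : S.card < n := by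
      have h := Finset.card_compl S
      rw [Fintype.card_fin] at h
      have h2 := Finset.card_le_univ S
      rw [Fintype.card_fin] at h2
      omega
    rw [vAge]
    set m := S.card with hm
    set T := ∑ i ∈ Sᶜ.attach, rate lam G S i.1 * vAge lam_e lam G (insert i.1 S) with hT
    set R := ∑ i ∈ Sᶜ, rate lam G S i with hR
    have hm1 : 1 ≤ m := hSne.card_pos
    have hm1R : (1:ℝ) ≤ (m:ℝ) := by exact_mod_cast hm1
    have hmnR : (m:ℝ) < (n:ℝ) := by exact_mod_cast hmn
    have hmu1 : (1:ℝ) ≤ ((min m (n-m) : ℕ) : ℝ) := by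
      have : 1 ≤ min m (n-m) := by omega
      exact_mod_cast this
    have hmuc : ((min m (n-m) : ℕ) : ℝ) = min (m:ℝ) ((n:ℝ)-(m:ℝ)) := by
      rw [Nat.cast_min, Nat.cast_sub hmn.le]
    -- boundary estimate
    have hE : 2 / 3 * (m:ℝ) * ((n:ℝ) - m) * p ≤ (edgeBoundary G S : ℝ) := by
      rcases le_or_gt (m:ℝ) ((n:ℝ)/2) with hc | hc
      · exact hbd S hSne hc
      · have hccN : Sᶜ.card = n - m := by rw [Finset.card_compl, Fintype.card_fin]
        have hccR : ((Sᶜ.card : ℕ) : ℝ) = (n:ℝ) - m := by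
          rw [hccN, Nat.cast_sub hmn.le]
        have h2 : ((Sᶜ.card : ℕ) : ℝ) ≤ (n:ℝ)/2 := by rw [hccR]; linarith
        have h1 := hbd Sᶜ hSc h2
        rw [hccR, edgeBoundary_compl] at h1
        have heq : 2/3*(m:ℝ)*((n:ℝ)-m)*p = 2/3*((n:ℝ)-m)*((n:ℝ)-((n:ℝ)-m))*p := by ring
        linarith
    -- lower bound on R
    have hRlow : 2/9 * lam * ((min m (n-m) : ℕ) : ℝ) ≤ R := by
      have hstep1 : ∀ i ∈ Sᶜ, lam * ((G.neighborFinset i ∩ S).card : ℝ) / (3*(n:ℝ)*p/2)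
          ≤ rate lam G S i := by
        intro i _
        have hd := hdeg i
        have hd0 : G.degree i ≠ 0 := by
          intro hz
          rw [hz] at hd
          push_cast at hd
          nlinarith [hd.1, hnpos, hp]
        unfold rate
        rw [if_neg hd0]
        have hdR : (0:ℝ) < (G.degree i : ℝ) := hdegpos i
        gcongr
        exact (hd.2).le
      have hsum : ∑ i ∈ Sᶜ, lam * ((G.neighborFinset i ∩ S).card : ℝ) / (3*(n:ℝ)*p/2)
          = lam * (edgeBoundary G S : ℝ) / (3*(n:ℝ)*p/2) := by
        rw [← sum_compl_card_inter G S]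
        push_cast
        rw [← Finset.sum_div, ← Finset.mul_sum]
      have h2 : lam * (edgeBoundary G S : ℝ) / (3*(n:ℝ)*p/2) ≤ R := by
        rw [← hsum]; exact Finset.sum_le_sum hstep1
      have h3 : lam * (2/3*(m:ℝ)*((n:ℝ)-m)*p) / (3*(n:ℝ)*p/2)
          ≤ lam * (edgeBoundary G S : ℝ) / (3*(n:ℝ)*p/2) := by gcongr
      have h4 : lam * (2/3*(m:ℝ)*((n:ℝ)-m)*p) / (3*(n:ℝ)*p/2)
          = 4/9 * lam * (m:ℝ) * ((n:ℝ)-m) / n := by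
        field_simp
        ring
      have h5 : 2/9 * lam * ((min m (n-m) : ℕ) : ℝ) ≤ 4/9 * lam * (m:ℝ) * ((n:ℝ)-m) / n := by
        rw [hmuc, le_div_iff₀ hnpos]
        have ha : min (m:ℝ) ((n:ℝ)-(m:ℝ)) ≤ (m:ℝ) := min_le_left _ _
        have hb : min (m:ℝ) ((n:ℝ)-(m:ℝ)) ≤ (n:ℝ)-(m:ℝ) := min_le_right _ _
        have hm0 : (0:ℝ) ≤ (m:ℝ) := by positivity
        have hnm0 : (0:ℝ) ≤ (n:ℝ)-(m:ℝ) := by linarith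
        have h6 : lam * (min (m:ℝ) ((n:ℝ)-m) * (m:ℝ)) ≤ lam * (((n:ℝ)-m) * (m:ℝ)) :=
          mul_le_mul_of_nonneg_left (mul_le_mul_of_nonneg_right hb hm0) hlam.le
        have h7 : lam * (min (m:ℝ) ((n:ℝ)-m) * ((n:ℝ)-m)) ≤ lam * ((m:ℝ) * ((n:ℝ)-m)) :=
          mul_le_mul_of_nonneg_left (mul_le_mul_of_nonneg_right ha hnm0) hlam.le
        nlinarith [h6, h7]
      linarith
    -- positivity facts
    have hmuR : (0:ℝ) < ((min m (n-m) : ℕ) : ℝ) := by linarith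
    have hmu0 : (0:ℝ) < 2/9*lam*((min m (n-m) : ℕ) : ℝ) :=
      mul_pos (mul_pos (by norm_num) hlam) hmuR
    have hmu0' : (0:ℝ) < 2*lam*((min m (n-m) : ℕ) : ℝ) :=
      mul_pos (mul_pos (by norm_num) hlam) hmuR
    have hDnn : (0:ℝ) ≤ lam * (m:ℝ)/(n:ℝ) := by positivity
    have hRpos : (0:ℝ) < R := lt_of_lt_of_le hmu0 hRlow
    have hDpos : (0:ℝ) < lam * (m:ℝ)/(n:ℝ) + R := by linarith
    -- inductive hypothesis bound
    set B := lam_e/lam + ∑ j ∈ Finset.Ico (m+1) n, 9*lam_e/(2*lam*((min j (n-j) : ℕ) : ℝ))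
      with hBdef
    have hBmem : ∀ i : {x // x ∈ Sᶜ}, vAge lam_e lam G (insert i.1 S) ≤ B := by
      intro i
      have hiS : i.1 ∉ S := by have h := i.2; rwa [Finset.mem_compl] at h
      have hcompl : (insert i.1 S)ᶜ.card = k - 1 := by
        rw [Finset.compl_insert, Finset.card_erase_of_mem i.2, hSk]
      have h := ih (k-1) (by omega) (insert i.1 S) hcompl (Finset.insert_nonempty _ _)
      rw [Finset.card_insert_of_notMem hiS] at h
      exact h
    have hBnn : (0:ℝ) ≤ B := by
      rw [hBdef]
      have h1 : (0:ℝ) ≤ ∑ j ∈ Finset.Ico (m+1) n, 9*lam_e/(2*lam*((min j (n-j) : ℕ) : ℝ)) :=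
        Finset.sum_nonneg fun j _ => by positivity
      have h2 : (0:ℝ) ≤ lam_e/lam := by positivity
      linarith
    have hnum : T ≤ R * B := by
      rw [hT, hR]
      calc ∑ i ∈ Sᶜ.attach, rate lam G S i.1 * vAge lam_e lam G (insert i.1 S)
          ≤ ∑ i ∈ Sᶜ.attach, rate lam G S i.1 * B :=
            Finset.sum_le_sum fun i _ => mul_le_mul_of_nonneg_left (hBmem i) (hratenn S i.1)
        _ = (∑ i ∈ Sᶜ.attach, rate lam G S i.1) * B := by rw [Finset.sum_mul]
        _ = (∑ i ∈ Sᶜ, rate lam G S i) * B := by rw [Finset.sum_attach]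
    -- main estimate
    have hfrac : (lam_e + T) / (lam * (m:ℝ)/(n:ℝ) + R)
        ≤ lam_e / (2/9*lam*((min m (n-m) : ℕ) : ℝ)) + B := by
      have hstep : (lam_e + T) / (lam * (m:ℝ)/(n:ℝ) + R)
          ≤ (lam_e + R*B) / (lam * (m:ℝ)/(n:ℝ) + R) :=
        (div_le_div_iff_of_pos_right hDpos).mpr (by linarith)
      have hsplit : (lam_e + R*B) / (lam * (m:ℝ)/(n:ℝ) + R)
          = lam_e/(lam*(m:ℝ)/(n:ℝ) + R) + R*B/(lam*(m:ℝ)/(n:ℝ) + R) := add_div _ _ _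
      have hpart1 : lam_e/(lam*(m:ℝ)/(n:ℝ) + R) ≤ lam_e/(2/9*lam*((min m (n-m) : ℕ) : ℝ)) :=
        div_le_div_of_nonneg_left hlam_e.le hmu0 (by linarith)
      have hpart2 : R*B/(lam*(m:ℝ)/(n:ℝ) + R) ≤ B := by
        rw [div_le_iff₀ hDpos]
        nlinarith [mul_nonneg hBnn hDnn]
      linarith [hstep, hsplit.le, hsplit.ge, hpart1, hpart2]
    have hterm : lam_e / (2/9*lam*((min m (n-m) : ℕ) : ℝ))
        = 9*lam_e/(2*lam*((min m (n-m) : ℕ) : ℝ)) := by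
      rw [div_eq_div_iff hmu0.ne' hmu0'.ne']
      ring
    have hIco : ∑ j ∈ Finset.Ico m n, 9*lam_e/(2*lam*((min j (n-j) : ℕ) : ℝ))
        = 9*lam_e/(2*lam*((min m (n-m) : ℕ) : ℝ))
          + ∑ j ∈ Finset.Ico (m+1) n, 9*lam_e/(2*lam*((min j (n-j) : ℕ) : ℝ)) :=
      Finset.sum_eq_sum_Ico_succ_bot hmn _
    rw [hIco]
    linarith [hfrac, hterm.le, hterm.ge, hBdef.le, hBdef.ge]


/-- If `100·log n/n ≤ p ≤ 1`, every degree of `G` lies strictly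
between `np/2` and `3np/2`, and every `S` with `1 ≤ |S| ≤ n/2` has
`|∂S| ≥ (2/3)|S|(n-|S|)p`, then every single-vertex version age is `O(log n)`. -/
theorem stmt_18 (lam_e lam : ℝ) (hlam_e : 0 < lam_e) (hlam : 0 < lam) :
    ∃ C : ℝ, 0 < C ∧ ∃ N : ℕ, ∀ n : ℕ, N ≤ n → ∀ p : ℝ,
      100 * Real.log n / n ≤ p → p ≤ 1 →
      ∀ G : SimpleGraph (Fin n),
        (∀ v : Fin n, (n : ℝ) * p / 2 < (G.degree v : ℝ) ∧
          (G.degree v : ℝ) < 3 * (n : ℝ) * p / 2) →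
        (∀ S : Finset (Fin n), S.Nonempty → (S.card : ℝ) ≤ (n : ℝ) / 2 →
          2 / 3 * (S.card : ℝ) * ((n : ℝ) - S.card) * p ≤ (edgeBoundary G S : ℝ)) →
        ∀ ℓ : Fin n, vAge lam_e lam G {ℓ} ≤ C * Real.log n := by
  refine ⟨20 * lam_e / lam, by positivity, 3, ?_⟩
  intro n hn p hp1 hp2 G hdeg hbd ℓ
  have hn0 : 0 < n := by omega
  have hnR : (3:ℝ) ≤ (n:ℝ) := by exact_mod_cast hn
  have hlog1 : (1:ℝ) ≤ Real.log n := by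
    rw [Real.le_log_iff_exp_le (by linarith)]
    calc Real.exp 1 ≤ 2.7182818286 := Real.exp_one_lt_d9.le
      _ ≤ (n:ℝ) := by linarith
  have hp : 0 < p := by
    have h0 : (0:ℝ) < 100 * Real.log n / n := by
      apply div_pos (by linarith) (by linarith)
    linarith
  have hkey := key_bound lam_e lam hlam_e hlam n hn0 p hp G hdeg hbd
    (({ℓ} : Finset (Fin n))ᶜ.card) {ℓ} rfl (Finset.singleton_nonempty ℓ)
  rw [Finset.card_singleton] at hkey
  -- bound the sum
  have hterm : ∀ j ∈ Finset.Ico 1 n, 9*lam_e/(2*lam*((min j (n-j) : ℕ) : ℝ))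
      ≤ 9*lam_e/(2*lam) * ((1:ℝ)/(j:ℝ) + 1/((n-j : ℕ):ℝ)) := by
    intro j hj
    rw [Finset.mem_Ico] at hj
    have hj1 : (1:ℝ) ≤ (j:ℝ) := by exact_mod_cast hj.1
    have hnj1 : (1:ℝ) ≤ ((n-j : ℕ):ℝ) := by
      have h : 1 ≤ n - j := by omega
      exact_mod_cast h
    rcases le_total j (n-j) with hc | hc
    · rw [min_eq_left hc]
      have heq : 9*lam_e/(2*lam*(j:ℝ)) = 9*lam_e/(2*lam) * (1/(j:ℝ)) := by
        rw [mul_one_div, div_div]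
      rw [heq, mul_add]
      have hz : (0:ℝ) ≤ 9*lam_e/(2*lam) * (1/((n-j : ℕ):ℝ)) := by positivity
      linarith
    · rw [min_eq_right hc]
      have heq : 9*lam_e/(2*lam*((n-j : ℕ):ℝ)) = 9*lam_e/(2*lam) * (1/((n-j : ℕ):ℝ)) := by
        rw [mul_one_div, div_div]
      rw [heq, mul_add]
      have hz : (0:ℝ) ≤ 9*lam_e/(2*lam) * (1/(j:ℝ)) := by positivity
      linarith
  have hsum1 : ∑ j ∈ Finset.Ico 1 n, (1:ℝ)/(j:ℝ)
      = ∑ i ∈ Finset.range (n-1), (1:ℝ)/(((1+i : ℕ)):ℝ) := by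
    rw [Finset.sum_Ico_eq_sum_range]
  have hsum2 : ∑ j ∈ Finset.Ico 1 n, (1:ℝ)/((n-j : ℕ):ℝ)
      = ∑ i ∈ Finset.range (n-1), (1:ℝ)/((n-(1+i) : ℕ):ℝ) := by
    rw [Finset.sum_Ico_eq_sum_range]
  have hreflect : ∑ i ∈ Finset.range (n-1), (1:ℝ)/((n-(1+i) : ℕ):ℝ)
      = ∑ i ∈ Finset.range (n-1), (1:ℝ)/(((1+i : ℕ)):ℝ) := by
    rw [← Finset.sum_range_reflect (fun i => (1:ℝ)/(((1+i : ℕ)):ℝ)) (n-1)]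
    apply Finset.sum_congr rfl
    intro i hi
    rw [Finset.mem_range] at hi
    congr 2
    omega
  have hhar : ∑ i ∈ Finset.range (n-1), (1:ℝ)/(((1+i : ℕ)):ℝ) ≤ 1 + Real.log n := by
    have he : ∑ i ∈ Finset.range (n-1), (1:ℝ)/(((1+i : ℕ)):ℝ)
        = ∑ i ∈ Finset.range (n-1), (1:ℝ)/((i:ℝ)+1) := by
      apply Finset.sum_congr rfl
      intro i _
      push_cast
      rw [add_comm]
    rw [he]
    refine (sum_inv_le (n-1)).trans ?_
    have hpos : (0:ℝ) < ((n-1 : ℕ):ℝ) := by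
      have h : 1 ≤ n - 1 := by omega
      exact_mod_cast Nat.lt_of_lt_of_le Nat.zero_lt_one h
    have hle : ((n-1 : ℕ):ℝ) ≤ (n:ℝ) := by
      have h : n - 1 ≤ n := by omega
      exact_mod_cast h
    have := Real.log_le_log hpos hle
    linarith
  have hfinal : ∑ j ∈ Finset.Ico 1 n, 9*lam_e/(2*lam*((min j (n-j) : ℕ) : ℝ))
      ≤ 9*lam_e/(2*lam) * (2*(1 + Real.log n)) := by
    calc ∑ j ∈ Finset.Ico 1 n, 9*lam_e/(2*lam*((min j (n-j) : ℕ) : ℝ))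
        ≤ ∑ j ∈ Finset.Ico 1 n, 9*lam_e/(2*lam) * ((1:ℝ)/(j:ℝ) + 1/((n-j : ℕ):ℝ)) :=
          Finset.sum_le_sum hterm
      _ = 9*lam_e/(2*lam) * ((∑ j ∈ Finset.Ico 1 n, (1:ℝ)/(j:ℝ))
            + ∑ j ∈ Finset.Ico 1 n, (1:ℝ)/((n-j : ℕ):ℝ)) := by
          rw [← Finset.sum_add_distrib, Finset.mul_sum]
      _ ≤ 9*lam_e/(2*lam) * (2*(1 + Real.log n)) := by
          rw [hsum1, hsum2, hreflect]
          have hc : (0:ℝ) ≤ 9*lam_e/(2*lam) := by positivity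
          have h2 : (∑ i ∈ Finset.range (n-1), (1:ℝ)/(((1+i : ℕ)):ℝ))
              + (∑ i ∈ Finset.range (n-1), (1:ℝ)/(((1+i : ℕ)):ℝ)) ≤ 2*(1 + Real.log n) := by
            linarith
          exact mul_le_mul_of_nonneg_left h2 hc
  have hrw : 9*lam_e/(2*lam) * (2*(1 + Real.log n)) = lam_e/lam * (9*(1 + Real.log n)) := by
    field_simp
  have hq : (0:ℝ) < lam_e/lam := by positivity
  have hC : lam_e / lam + 9*lam_e/(2*lam) * (2*(1 + Real.log n)) ≤ 20 * lam_e / lam * Real.log n := by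
    rw [hrw]
    have hkey2 : (0:ℝ) ≤ lam_e/lam * (11 * Real.log n - 10) :=
      mul_nonneg hq.le (by linarith)
    have hexp : lam_e/lam * (11 * Real.log n - 10) =
        20 * lam_e / lam * Real.log n - (lam_e / lam + lam_e/lam * (9*(1 + Real.log n))) := by
      field_simp
      ring
    linarith
  linarith [hkey, hfinal]
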